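/- Let q be a prime power, k ≥ 1, ℓ ≥ 3, and let S ⊆ G_q(k, ℓk) be a spread, i.e., a partial spread with |S| = (q^{ℓk} − 1)/(q^k − 1). Then S^⊥ ⊆ G_q((ℓ−1)k, ℓk) is an equidistant ((ℓ−2)k)-intersecting code of the same cardinality which is not a sunflower. -/

import Mathlib

open Submodule Module Set

/-- The orthogonal complement of a subspace of `Fin n → F` with respect to the
standard bilinear form `(x, y) ↦ ∑ i, x i * y i`. -/
def stdOrth {F : Type} [Field F] {n : ℕ} (U : Submodule F (Fin n → F)) :
    Submodule F (Fin n → F) where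
  carrier := {x | ∀ y ∈ U, ∑ i, x i * y i = 0}
  add_mem' := by
    intro a b ha hb y hy
    simp only [Set.mem_setOf_eq] at *
    simp [add_mul, Finset.sum_add_distrib, ha y hy, hb y hy]
  zero_mem' := by intro y hy; simp
  smul_mem' := by
    intro c a ha y hy
    simp only [Set.mem_setOf_eq] at *
    simp [smul_eq_mul, mul_assoc, ← Finset.mul_sum, ha y hy]

/-- An equidistant `c`-intersecting subspace code of constant dimension `k` in `F^n`:
a set of at least two `k`-dimensional subspaces, any two distinct members of which
intersect in dimension `c`. -/
def IsEquidistantCode (F : Type) [Field F] (n k c : ℕ)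
    (C : Set (Submodule F (Fin n → F))) : Prop :=
  2 ≤ C.ncard ∧ (∀ U ∈ C, Module.finrank F U = k) ∧
    ∀ U ∈ C, ∀ V ∈ C, U ≠ V → Module.finrank F ↥(U ⊓ V) = c

/-- A set of subspaces is a sunflower if there is a common center `Z` equal to the
intersection of any two distinct members. -/
def IsSunflower {F : Type} [Field F] {n : ℕ} (C : Set (Submodule F (Fin n → F))) : Prop :=
  ∃ Z : Submodule F (Fin n → F), ∀ U ∈ C, ∀ V ∈ C, U ≠ V → U ⊓ V = Z

/-- `eMax F n k c` is the maximum cardinality of an equidistant `c`-intersecting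
code of constant dimension `k` in `F^n`. -/
noncomputable def eMax (F : Type) [Field F] (n k c : ℕ) : ℕ :=
  sSup {m | ∃ C : Set (Submodule F (Fin n → F)), IsEquidistantCode F n k c C ∧ C.ncard = m}

/-!
Orthogonality turns spans into intersections, so two members `U^⊥, V^⊥` of `S^⊥` meet in
`(U ⊔ V)^⊥`, of dimension `ℓk - 2k`. If `S^⊥` were a sunflower, then `(A ⊔ U)^⊥ = (V ⊔ U)^⊥`
for every `A ∈ S`, so the whole spread would lie in the `2k`-dimensional space `U ⊔ V`. Picking a
nonzero vector in each member then gives fewer than `q ^ 2k` elements, while a spread has at least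
`q ^ (ℓ - 1)k` of them.
-/

theorem pow_pred_le_pow_sub_one_div {m t : ℕ} (hm : 2 ≤ m) (ht : 1 ≤ t) :
    m ^ (t - 1) ≤ (m ^ t - 1) / (m - 1) := by
  rw [← Nat.geomSum_eq hm]
  exact Finset.single_le_sum (fun _ _ => Nat.zero_le _) (Finset.mem_range.mpr (by omega))

theorem finrank_sup_of_inf_eq_bot {K V : Type*} [DivisionRing K] [AddCommGroup V] [Module K V]
    {U W : Submodule K V} [FiniteDimensional K U] [FiniteDimensional K W] (h : U ⊓ W = ⊥) :
    finrank K ↥(U ⊔ W) = finrank K U + finrank K W := by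
  have hsum := finrank_sup_add_finrank_inf_eq U W
  rwa [h, finrank_bot, add_zero] at hsum

theorem ncard_le_natCard_sub_one_of_inf_eq_bot {R M : Type*} [Semiring R] [AddCommMonoid M]
    [Module R M] {S : Set (Submodule R M)} (W : Submodule R M) [Finite W]
    (hne : ∀ A ∈ S, A ≠ ⊥) (hle : ∀ A ∈ S, A ≤ W)
    (hsp : ∀ A ∈ S, ∀ B ∈ S, A ≠ B → A ⊓ B = ⊥) :
    S.ncard ≤ Nat.card W - 1 := by
  choose! v hv_mem hv_ne using fun A hA => exists_mem_ne_zero_of_ne_bot (hne A hA)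
  have hv_inj : InjOn v S := fun A hA B hB hAB => by
    by_contra hAB'
    have : v A ∈ A ⊓ B := ⟨hv_mem A hA, hAB ▸ hv_mem B hB⟩
    exact hv_ne A hA (by simpa [hsp A hA B hB hAB'] using this)
  calc S.ncard ≤ ((W : Set M) \ {0}).ncard :=
        ncard_le_ncard_of_injOn v (fun A hA => ⟨hle A hA (hv_mem A hA), hv_ne A hA⟩) hv_inj
          (W : Set M).toFinite.sdiff
    _ = Nat.card W - 1 := by
        rw [ncard_sdiff_singleton_of_mem W.zero_mem, ← Nat.card_coe_set_eq]
        rfl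

section StdOrth

variable {F : Type} [Field F] {n : ℕ}

theorem stdOrth_eq_comap_dualAnnihilator (U : Submodule F (Fin n → F)) :
    stdOrth U = U.dualAnnihilator.comap (dotProductEquiv F (Fin n)).toLinearMap := by
  ext x
  simp [mem_dualAnnihilator, stdOrth, dotProduct]

theorem finrank_stdOrth (U : Submodule F (Fin n → F)) :
    finrank F (stdOrth U) = n - finrank F U := by
  have h := Subspace.finrank_add_finrank_dualAnnihilator_eq U
  rw [finrank_fin_fun] at h
  rw [stdOrth_eq_comap_dualAnnihilator, comap_equiv_eq_map_symm, LinearEquiv.finrank_map_eq]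
  omega

theorem stdOrth_sup (U V : Submodule F (Fin n → F)) :
    stdOrth (U ⊔ V) = stdOrth U ⊓ stdOrth V := by
  simp only [stdOrth_eq_comap_dualAnnihilator, dualAnnihilator_sup_eq, comap_inf]

theorem stdOrth_injective : Function.Injective (stdOrth (F := F) (n := n)) := fun U V h =>
  Subspace.dualAnnihilator_inj.mp <|
    comap_injective_of_surjective (dotProductEquiv F (Fin n)).surjective <| by
      rwa [stdOrth_eq_comap_dualAnnihilator, stdOrth_eq_comap_dualAnnihilator] at h

theorem le_sup_of_isSunflower_image_stdOrth {S : Set (Submodule F (Fin n → F))}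
    (hS : IsSunflower (stdOrth '' S)) {U V A : Submodule F (Fin n → F)}
    (hU : U ∈ S) (hV : V ∈ S) (hUV : U ≠ V) (hA : A ∈ S) :
    A ≤ U ⊔ V := by
  obtain ⟨Z, hZ⟩ := hS
  have hcenter : ∀ B ∈ S, B ≠ U → stdOrth (B ⊔ U) = Z := fun B hB hBU =>
    (stdOrth_sup B U).trans <|
      hZ _ (mem_image_of_mem _ hB) _ (mem_image_of_mem _ hU) (stdOrth_injective.ne hBU)
  by_cases hAU : A = U
  · exact hAU ▸ le_sup_left
  · have h : A ⊔ U = V ⊔ U :=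
      stdOrth_injective ((hcenter A hA hAU).trans (hcenter V hV hUV.symm).symm)
    exact sup_comm U V ▸ h ▸ le_sup_left

end StdOrth

section PartialSpread

variable {F : Type} [Field F] {n k : ℕ} {S : Set (Submodule F (Fin n → F))}

theorem isEquidistantCode_image_stdOrth (hS : 2 ≤ S.ncard)
    (hdim : ∀ U ∈ S, finrank F U = k) (hsp : ∀ U ∈ S, ∀ V ∈ S, U ≠ V → U ⊓ V = ⊥) :
    IsEquidistantCode F n (n - k) (n - (k + k)) (stdOrth '' S) := by
  refine ⟨(ncard_image_of_injective S stdOrth_injective).symm ▸ hS, ?_, ?_⟩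
  · rintro _ ⟨U, hU, rfl⟩
    rw [finrank_stdOrth, hdim U hU]
  · rintro _ ⟨U, hU, rfl⟩ _ ⟨V, hV, rfl⟩ hne
    have hUV : U ≠ V := fun h => hne (h ▸ rfl)
    rw [← stdOrth_sup, finrank_stdOrth, finrank_sup_of_inf_eq_bot (hsp U hU V hV hUV),
      hdim U hU, hdim V hV]

theorem not_isSunflower_image_stdOrth [Finite F] (hk : 1 ≤ k)
    (hdim : ∀ U ∈ S, finrank F U = k) (hsp : ∀ U ∈ S, ∀ V ∈ S, U ≠ V → U ⊓ V = ⊥)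
    (hS : Nat.card F ^ (k + k) ≤ S.ncard) :
    ¬ IsSunflower (stdOrth '' S) := by
  intro hsf
  have hpow : 2 ≤ Nat.card F ^ (k + k) :=
    (Finite.one_lt_card (α := F)).trans_le (Nat.le_self_pow (by omega) _)
  obtain ⟨U, hU, V, hV, hUV⟩ : ∃ U ∈ S, ∃ V ∈ S, U ≠ V :=
    (one_lt_ncard (finite_of_ncard_pos (by omega))).mp (by omega)
  have hne : ∀ A ∈ S, A ≠ ⊥ := fun A hA hA0 => by
    have := hdim A hA
    rw [hA0, finrank_bot] at this
    omega
  have hcard : Nat.card ↥(U ⊔ V) = Nat.card F ^ (k + k) := by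
    rw [natCard_eq_pow_finrank (K := F), finrank_sup_of_inf_eq_bot (hsp U hU V hV hUV),
      hdim U hU, hdim V hV]
  have := ncard_le_natCard_sub_one_of_inf_eq_bot (U ⊔ V) hne
    (fun A hA => le_sup_of_isSunflower_image_stdOrth hsf hU hV hUV hA) hsp
  omega

end PartialSpread

theorem orth_of_spread_not_sunflower_general
    (q : ℕ) (F : Type) [Field F] [Fintype F]
    (hF : Fintype.card F = q) (k ℓ : ℕ) (hk : 1 ≤ k) (hl : 3 ≤ ℓ)
    (S : Set (Submodule F (Fin (ℓ * k) → F)))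
    (hdim : ∀ U ∈ S, Module.finrank F U = k)
    (hsp : ∀ U ∈ S, ∀ V ∈ S, U ≠ V → U ⊓ V = ⊥)
    (hcard : S.ncard = (q ^ (ℓ * k) - 1) / (q ^ k - 1)) :
    IsEquidistantCode F (ℓ * k) ((ℓ - 1) * k) ((ℓ - 2) * k) (stdOrth '' S) ∧
    (stdOrth '' S).ncard = S.ncard ∧
    ¬ IsSunflower (stdOrth '' S) := by
  have hq : 2 ≤ q := hF ▸ Fintype.one_lt_card
  have hlarge : q ^ (k + k) ≤ S.ncard := calc
    q ^ (k + k) ≤ (q ^ k) ^ (ℓ - 1) := by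
      rw [← pow_mul, ← mul_two]
      exact Nat.pow_le_pow_right (by omega) (Nat.mul_le_mul_left k (by omega))
    _ ≤ S.ncard := by
      rw [hcard, mul_comm ℓ k, pow_mul]
      exact pow_pred_le_pow_sub_one_div (hq.trans (Nat.le_self_pow (by omega) q)) (by omega)
  have hS : 2 ≤ S.ncard := hq.trans ((Nat.le_self_pow (by omega) q).trans hlarge)
  refine ⟨?_, ncard_image_of_injective S stdOrth_injective, ?_⟩
  · simpa only [Nat.sub_mul, one_mul, two_mul] using isEquidistantCode_image_stdOrth hS hdim hsp
  · rw [← hF, ← Nat.card_eq_fintype_card] at hlarge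
    exact not_isSunflower_image_stdOrth hk hdim hsp hlarge

/-- The orthogonal of a spread `S ⊆ G_q(k, ℓk)` (`ℓ ≥ 3`) is an equidistant
`(ℓ-2)k`-intersecting code of the same cardinality which is not a sunflower. -/
theorem orth_of_spread_not_sunflower
    (q : ℕ) (hq : IsPrimePow q) (F : Type) [Field F] [Fintype F]
    (hF : Fintype.card F = q) (k ℓ : ℕ) (hk : 1 ≤ k) (hl : 3 ≤ ℓ)
    (S : Set (Submodule F (Fin (ℓ * k) → F)))
    (hdim : ∀ U ∈ S, Module.finrank F U = k)
    (hsp : ∀ U ∈ S, ∀ V ∈ S, U ≠ V → U ⊓ V = ⊥)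
    (hcard : S.ncard = (q ^ (ℓ * k) - 1) / (q ^ k - 1)) :
    IsEquidistantCode F (ℓ * k) ((ℓ - 1) * k) ((ℓ - 2) * k) (stdOrth '' S) ∧
    (stdOrth '' S).ncard = S.ncard ∧
    ¬ IsSunflower (stdOrth '' S) :=
  orth_of_spread_not_sunflower_general q F hF k ℓ hk hl S hdim hsp hcard
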